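/- Let f be a joint density of (Y_1, …, Y_J) given by a truncated regular vine pair-copula construction. If every pair copula density in the construction whose index pair or conditioning set involves both indices u and v is the independence copula, then Y_u and Y_v are fully conditionally independent given all remaining variables: f factorizes as a product of functions none of which depends on both y_u and y_v. -/
import Mathlib


open Finset

/-- Proposition 1 / Theorem 1 of the paper. Consider a joint density given by a
(truncated, simplified) regular vine pair-copula construction: `f` is the product of the
marginal densities `fm j (y j)` and of pair-copula factors `φ e` (one per vine edge `e`,
the copula density evaluated at conditional CDFs), where the factor `φ e` depends only on
the coordinates in its index set `I e` (the conditioned pair together with the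
conditioning set). If every pair copula whose index pair or conditioning set involves
both `u` and `v` is the independence copula (whose density is constantly `1`), then
`Y_u` and `Y_v` are fully conditionally independent given all remaining variables: `f`
factorizes into a product of a function not depending on `y_v` and a function not
depending on `y_u`. -/
theorem vine_independence_copulas_full_conditional_independence
    (J : ℕ) (u v : Fin J) (huv : u ≠ v)
    (E : Type) [Fintype E]
    (I : E → Finset (Fin J))
    (φ : E → (Fin J → ℝ) → ℝ)
    (fm : Fin J → ℝ → ℝ)
    (f : (Fin J → ℝ) → ℝ)
    (hf : ∀ y : Fin J → ℝ, f y = (∏ j, fm j (y j)) * ∏ e : E, φ e y)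
    (hdep : ∀ (e : E) (y y' : Fin J → ℝ), (∀ i ∈ I e, y i = y' i) → φ e y = φ e y')
    (hindep : ∀ e : E, u ∈ I e → v ∈ I e → φ e = fun _ => 1) :
    ∃ g h : (Fin J → ℝ) → ℝ,
      (∀ y, f y = g y * h y) ∧
      (∀ y y' : Fin J → ℝ, (∀ i, i ≠ v → y i = y' i) → g y = g y') ∧
      (∀ y y' : Fin J → ℝ, (∀ i, i ≠ u → y i = y' i) → h y = h y') := by

  classical
  refine ⟨fun y => (∏ j ∈ univ.erase v, fm j (y j)) *
      ∏ e ∈ univ.filter (fun e => v ∉ I e), φ e y,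
    fun y => fm v (y v) * ∏ e ∈ univ.filter (fun e => v ∈ I e), φ e y, ?_, ?_, ?_⟩
  · intro y
    rw [hf y]
    have h1 : (∏ j, fm j (y j)) = fm v (y v) * ∏ j ∈ univ.erase v, fm j (y j) :=
      (Finset.mul_prod_erase univ _ (mem_univ v)).symm
    have h2 : (∏ e : E, φ e y) =
        (∏ e ∈ univ.filter (fun e => v ∉ I e), φ e y) *
        (∏ e ∈ univ.filter (fun e => v ∈ I e), φ e y) := by
      rw [← Finset.prod_filter_mul_prod_filter_not univ (fun e => v ∈ I e)]
      ring
    rw [h1, h2]; ring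
  · intro y y' hy
    refine congrArg₂ (· * ·) (Finset.prod_congr rfl fun j hj => by
        rw [hy j (Finset.ne_of_mem_erase hj)]) (Finset.prod_congr rfl fun e he => ?_)
    have hv := (Finset.mem_filter.mp he).2
    exact hdep e y y' (fun i hi => hy i (fun h => hv (h ▸ hi)))
  · intro y y' hy
    refine congrArg₂ (· * ·) (congrArg _ (hy v huv.symm))
      (Finset.prod_congr rfl fun e he => ?_)
    have hv := (Finset.mem_filter.mp he).2
    by_cases hu : u ∈ I e
    · rw [hindep e hu hv]
    · exact hdep e y y' (fun i hi => hy i (fun h => hu (h ▸ hi)))
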